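/- Assume the perturbed blended dynamics ṡ = (1/N)∑_i F_i(t, s + e_i, z_i), ż_i = Z_i(t, z_i, s + e_i) is ISS with (β, γ̂) for a closed set A, and assume the funnel objective holds so that the synchronization errors satisfy ‖e_i(t)‖_∞ ≤ d_G Ψ(t) for all t ≥ t_0 and all i. Then for any M_{x_0} > 0 and any decreasing w : [0, ∞) → (0, 1] with lim w = 0 there exists γ ∈ 𝒦_∞ such that, for all t ≥ t_0, max_i ‖(y_i(t), z_1(t), ..., z_N(t))‖_A ≤ β(‖((1/N)∑_i y_i(t_0), z_1(t_0), ..., z_N(t_0))‖_A, t − t_0) + γ(sup_{s∈[t_0,t)} d_G Ψ(s) w(t − s)) + d_G Ψ(t), for any solution with ‖((1/N)∑_i y_i(t_0), z_1(t_0), ..., z_N(t_0))‖_A ≤ M_{x_0}. -/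

import Mathlib

open Filter

def ClassKinf (γ : ℝ → ℝ) : Prop :=
  ContinuousOn γ (Set.Ici 0) ∧ StrictMonoOn γ (Set.Ici 0) ∧ γ 0 = 0 ∧
    Tendsto γ atTop atTop

def ClassKL (β : ℝ → ℝ → ℝ) : Prop :=
  (∀ t ∈ Set.Ici (0 : ℝ), ContinuousOn (fun r => β r t) (Set.Ici 0) ∧
      StrictMonoOn (fun r => β r t) (Set.Ici 0) ∧ β 0 t = 0) ∧
  (∀ r > (0 : ℝ), AntitoneOn (β r) (Set.Ici 0) ∧ Tendsto (β r) atTop (nhds 0)) ∧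
  (∀ r ≥ (0 : ℝ), ∀ t ≥ (0 : ℝ), 0 ≤ β r t)

/-!
The average `s = N⁻¹ ∑ yᵢ` solves the perturbed blended dynamics with inputs `eᵢ = yᵢ - s`,
which the funnel keeps below `D = d_G sup Ψ`; hence the blended state `x = (s, z)` satisfies
`‖x‖_A ≤ B := β(M, 0) + γ̂(D)` at all times.
Restarting the ISS estimate at `t - T`, where the state is at most `B` and after which the
inputs are at most `S / w(T)` with `S = sup_{s<t} d_G Ψ(s) w(t - s)` (as `w` decreases), gives
for every horizon `T ≥ 0`
  `‖x(t)‖_A ≤ β(‖x(t₀)‖_A, t - t₀) + β(B, T) + γ̂(min(D, S / w(T)))`.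
The infimum over `T` of the last two terms is nondecreasing in `S` and tends to `0` with `S`;
averaging it over the dilations `r ↦ r (1 + τ)`, `τ ∈ [0, 1]`, makes it continuous, and adding
`r` makes it a class-`𝒦∞` bound. Finally `yᵢ(t)` is within `d_G Ψ(t)` of `s(t)`.
-/

open Set Topology MeasureTheory intervalIntegral

lemma tendsto_const_mul_nhdsGE_zero {c : ℝ} (hc : 0 ≤ c) :
    Tendsto (fun r => c * r) (𝓝[≥] 0) (𝓝[≥] 0) := by
  refine tendsto_nhdsWithin_of_tendsto_nhds_of_eventually_within _ ?_ ?_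
  · exact ((continuous_const.mul continuous_id).tendsto' 0 0 (by simp)).mono_left
      nhdsWithin_le_nhds
  · filter_upwards [self_mem_nhdsWithin] with r (hr : 0 ≤ r) using mul_nonneg hc hr

namespace ClassKinf

variable {γ : ℝ → ℝ}

lemma monotoneOn (hγ : ClassKinf γ) : MonotoneOn γ (Ici 0) := hγ.2.1.monotoneOn

lemma nonneg (hγ : ClassKinf γ) {r : ℝ} (hr : 0 ≤ r) : 0 ≤ γ r :=
  hγ.2.2.1 ▸ hγ.monotoneOn self_mem_Ici hr hr

lemma tendsto_nhdsGE_zero (hγ : ClassKinf γ) : Tendsto γ (𝓝[≥] 0) (𝓝 0) := by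
  simpa [ContinuousWithinAt, hγ.2.2.1] using hγ.1 0 self_mem_Ici

end ClassKinf

namespace ClassKL

variable {β : ℝ → ℝ → ℝ}

lemma nonneg (hβ : ClassKL β) {r t : ℝ} (hr : 0 ≤ r) (ht : 0 ≤ t) : 0 ≤ β r t :=
  hβ.2.2 r hr t ht

lemma mono_left (hβ : ClassKL β) {r s t : ℝ} (ht : 0 ≤ t) (hr : 0 ≤ r) (hrs : r ≤ s) :
    β r t ≤ β s t :=
  (hβ.1 t ht).2.1.monotoneOn hr (hr.trans hrs) hrs

lemma le_at_zero (hβ : ClassKL β) {r t : ℝ} (hr : 0 < r) (ht : 0 ≤ t) : β r t ≤ β r 0 :=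
  (hβ.2.1 r hr).1 self_mem_Ici ht ht

lemma pos_at_zero (hβ : ClassKL β) {r : ℝ} (hr : 0 < r) : 0 < β r 0 := by
  have h : β 0 0 < β r 0 := (hβ.1 0 self_mem_Ici).2.1 self_mem_Ici hr.le hr
  rwa [(hβ.1 0 self_mem_Ici).2.2] at h

lemma exists_lt (hβ : ClassKL β) {r ε : ℝ} (hr : 0 < r) (hε : 0 < ε) :
    ∃ T, 0 ≤ T ∧ β r T < ε :=
  (((hβ.2.1 r hr).2.eventually (gt_mem_nhds hε)).and (eventually_ge_atTop 0)).exists.imp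
    fun _ h => ⟨h.2, h.1⟩

end ClassKL

noncomputable def dilationAverage (g : ℝ → ℝ) (r : ℝ) : ℝ :=
  ∫ t in (0 : ℝ)..1, g (r * (1 + t))

namespace Monotone

variable {g : ℝ → ℝ}

lemma intervalIntegrable_comp_dilation (hg : Monotone g) {r : ℝ} (hr : 0 ≤ r) :
    IntervalIntegrable (fun t => g (r * (1 + t))) volume 0 1 :=
  (hg.comp fun a b hab => by nlinarith).intervalIntegrable

lemma dilationAverage_mono (hg : Monotone g) {r₁ r₂ : ℝ} (h₁ : 0 ≤ r₁)
    (h₁₂ : r₁ ≤ r₂) :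
    dilationAverage g r₁ ≤ dilationAverage g r₂ :=
  integral_mono_on zero_le_one (hg.intervalIntegrable_comp_dilation h₁)
    (hg.intervalIntegrable_comp_dilation (h₁.trans h₁₂))
    fun _ ht => hg (by nlinarith [ht.1])

lemma le_dilationAverage (hg : Monotone g) {r : ℝ} (hr : 0 ≤ r) :
    g r ≤ dilationAverage g r := by
  simpa [dilationAverage] using integral_mono_on zero_le_one intervalIntegrable_const
    (hg.intervalIntegrable_comp_dilation hr) fun _ ht => hg (by nlinarith [ht.1])

lemma dilationAverage_le (hg : Monotone g) {r : ℝ} (hr : 0 ≤ r) :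
    dilationAverage g r ≤ g (2 * r) := by
  simpa [dilationAverage] using integral_mono_on zero_le_one
    (hg.intervalIntegrable_comp_dilation hr) intervalIntegrable_const
    fun _ ht => hg (by nlinarith [ht.2])

lemma continuousAt_dilationAverage (hg : Monotone g) {r : ℝ} (hr : 0 < r) :
    ContinuousAt (dilationAverage g) r := by
  have hint : ∀ a b, IntervalIntegrable g volume a b := fun _ _ => hg.intervalIntegrable
  have hprim := intervalIntegral.continuous_primitive hint 0
  have heq : ∀ᶠ x in 𝓝 r, x⁻¹ * ((∫ u in (0 : ℝ)..2 * x, g u) - ∫ u in (0 : ℝ)..x, g u) =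
      dilationAverage g x := by
    filter_upwards [eventually_ne_nhds hr.ne'] with x hx
    have h := integral_comp_mul_add (a := 0) (b := 1) g hx x
    simp only [mul_zero, zero_add, mul_one, smul_eq_mul, ← two_mul] at h
    rw [integral_interval_sub_left (hint _ _) (hint _ _), ← h, dilationAverage]
    simp only [mul_add, mul_one, add_comm]
  refine ContinuousAt.congr ?_ heq
  exact (continuousAt_inv₀ hr.ne').mul
    (((hprim.comp (continuous_const.mul continuous_id)).sub hprim).continuousAt)

lemma exists_classKinf_ge (hg : Monotone g) (hg0 : g 0 = 0)
    (hcont : ContinuousWithinAt g (Ici 0) 0) :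
    ∃ γ : ℝ → ℝ, ClassKinf γ ∧ ∀ r, 0 ≤ r → g r ≤ γ r := by
  have hΦ0 : dilationAverage g 0 = 0 := by simp [dilationAverage, hg0]
  have hΦnn : ∀ r, 0 ≤ r → 0 ≤ dilationAverage g r := fun r hr =>
    hg0 ▸ (hg hr).trans (hg.le_dilationAverage hr)
  have hΦcont0 : ContinuousWithinAt (dilationAverage g) (Ici 0) 0 := by
    have hgt : Tendsto g (𝓝[≥] 0) (𝓝 0) := by simpa [ContinuousWithinAt, hg0] using hcont
    have h2 : Tendsto (fun r => g (2 * r)) (𝓝[≥] 0) (𝓝 0) :=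
      hgt.comp (tendsto_const_mul_nhdsGE_zero zero_le_two)
    rw [ContinuousWithinAt, hΦ0]
    refine tendsto_of_tendsto_of_tendsto_of_le_of_le' tendsto_const_nhds h2 ?_ ?_
    · filter_upwards [self_mem_nhdsWithin] with r hr using hΦnn r hr
    · filter_upwards [self_mem_nhdsWithin] with r hr using hg.dilationAverage_le hr
  refine ⟨fun r => r + dilationAverage g r, ⟨?_, ?_, by simp [hΦ0], ?_⟩,
    fun r hr => (hg.le_dilationAverage hr).trans (le_add_of_nonneg_left hr)⟩
  · intro r (hr : 0 ≤ r)
    refine continuousWithinAt_id.add ?_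
    rcases hr.eq_or_lt with rfl | hr
    · exact hΦcont0
    · exact (hg.continuousAt_dilationAverage hr).continuousWithinAt
  · intro a (ha : 0 ≤ a) b _ hab
    exact add_lt_add_of_lt_of_le hab (hg.dilationAverage_mono ha hab.le)
  · refine tendsto_atTop_mono' atTop ?_ tendsto_id
    filter_upwards [eventually_ge_atTop 0] with r hr using le_add_of_nonneg_right (hΦnn r hr)

end Monotone

lemma MonotoneOn.exists_classKinf_ge {g : ℝ → ℝ} (hg : MonotoneOn g (Ici 0)) (hg0 : g 0 = 0)
    (hcont : ContinuousWithinAt g (Ici 0) 0) :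
    ∃ γ : ℝ → ℝ, ClassKinf γ ∧ ∀ r, 0 ≤ r → g r ≤ γ r := by
  have hext : Monotone fun r => g (max r 0) := fun a b hab =>
    hg (le_max_right a 0) (le_max_right b 0) (max_le_max_right 0 hab)
  obtain ⟨γ, hγ, hle⟩ := hext.exists_classKinf_ge (by simpa using hg0)
    (hcont.congr (fun r (hr : 0 ≤ r) => by simp [hr]) (by simp))
  exact ⟨γ, hγ, fun r hr => by simpa [hr] using hle r hr⟩

noncomputable def memoryGain (β : ℝ → ℝ → ℝ) (ρ : ℝ → ℝ) (B D : ℝ) (w : ℝ → ℝ) (r : ℝ) : ℝ :=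
  ⨅ T : Ici (0 : ℝ), (β B T + ρ (min D (r / w T)))

section MemoryGain

variable {β : ℝ → ℝ → ℝ} {ρ w : ℝ → ℝ} {B D : ℝ}

lemma memoryGain_term_nonneg (hβ : ClassKL β) (hρ : ClassKinf ρ) (hB : 0 ≤ B) (hD : 0 ≤ D)
    (hw : ∀ t ≥ 0, 0 < w t) {r : ℝ} (hr : 0 ≤ r) (T : Ici (0 : ℝ)) :
    0 ≤ β B T + ρ (min D (r / w T)) :=
  add_nonneg (hβ.nonneg hB T.2) (hρ.nonneg (le_min hD (div_nonneg hr (hw T T.2).le)))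

lemma memoryGain_le (hβ : ClassKL β) (hρ : ClassKinf ρ) (hB : 0 ≤ B) (hD : 0 ≤ D)
    (hw : ∀ t ≥ 0, 0 < w t) {r : ℝ} (hr : 0 ≤ r) (T : Ici (0 : ℝ)) :
    memoryGain β ρ B D w r ≤ β B T + ρ (min D (r / w T)) :=
  ciInf_le ⟨0, forall_mem_range.2 (memoryGain_term_nonneg hβ hρ hB hD hw hr)⟩ T

lemma memoryGain_nonneg (hβ : ClassKL β) (hρ : ClassKinf ρ) (hB : 0 ≤ B) (hD : 0 ≤ D)
    (hw : ∀ t ≥ 0, 0 < w t) {r : ℝ} (hr : 0 ≤ r) : 0 ≤ memoryGain β ρ B D w r :=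
  le_ciInf (memoryGain_term_nonneg hβ hρ hB hD hw hr)

lemma monotoneOn_memoryGain (hβ : ClassKL β) (hρ : ClassKinf ρ) (hB : 0 ≤ B) (hD : 0 ≤ D)
    (hw : ∀ t ≥ 0, 0 < w t) : MonotoneOn (memoryGain β ρ B D w) (Ici 0) := by
  intro r₁ (h₁ : 0 ≤ r₁) r₂ _ h₁₂
  refine ciInf_mono ⟨0, forall_mem_range.2 (memoryGain_term_nonneg hβ hρ hB hD hw h₁)⟩
    fun T => add_le_add_right (hρ.monotoneOn ?_ ?_ ?_) _
  · exact le_min hD (div_nonneg h₁ (hw T T.2).le)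
  · exact le_min hD (div_nonneg (h₁.trans h₁₂) (hw T T.2).le)
  · exact min_le_min_left _ (div_le_div_of_nonneg_right h₁₂ (hw T T.2).le)

lemma eventually_memoryGain_lt (hβ : ClassKL β) (hρ : ClassKinf ρ) (hB : 0 < B) (hD : 0 ≤ D)
    (hw : ∀ t ≥ 0, 0 < w t) {ε : ℝ} (hε : 0 < ε) :
    ∀ᶠ r in 𝓝[≥] 0, memoryGain β ρ B D w r < ε := by
  obtain ⟨T, hT, hβT⟩ := hβ.exists_lt hB (half_pos hε)
  have hρsmall : ∀ᶠ r in 𝓝[≥] 0, ρ ((w T)⁻¹ * r) < ε / 2 :=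
    (hρ.tendsto_nhdsGE_zero.comp (tendsto_const_mul_nhdsGE_zero (inv_nonneg.2 (hw T hT).le)))
      |>.eventually (gt_mem_nhds (half_pos hε))
  filter_upwards [hρsmall, self_mem_nhdsWithin] with r hr (hr0 : 0 ≤ r)
  have hmin : ρ (min D (r / w T)) ≤ ρ ((w T)⁻¹ * r) := by
    have hq : 0 ≤ r / w T := div_nonneg hr0 (hw T hT).le
    rw [← div_eq_inv_mul]
    exact hρ.monotoneOn (le_min hD hq) hq (min_le_right _ _)
  calc memoryGain β ρ B D w r ≤ β B T + ρ (min D (r / w T)) :=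
        memoryGain_le hβ hρ hB.le hD hw hr0 ⟨T, hT⟩
    _ < ε := by linarith

lemma memoryGain_zero (hβ : ClassKL β) (hρ : ClassKinf ρ) (hB : 0 < B) (hD : 0 ≤ D)
    (hw : ∀ t ≥ 0, 0 < w t) : memoryGain β ρ B D w 0 = 0 :=
  le_antisymm (le_of_forall_pos_lt_add fun ε hε => by
      simpa using (eventually_memoryGain_lt hβ hρ hB hD hw hε).self_of_nhdsWithin self_mem_Ici)
    (memoryGain_nonneg hβ hρ hB.le hD hw le_rfl)

lemma continuousWithinAt_memoryGain_zero (hβ : ClassKL β) (hρ : ClassKinf ρ) (hB : 0 < B)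
    (hD : 0 ≤ D) (hw : ∀ t ≥ 0, 0 < w t) :
    ContinuousWithinAt (memoryGain β ρ B D w) (Ici 0) 0 := by
  rw [ContinuousWithinAt, memoryGain_zero hβ hρ hB hD hw]
  refine tendsto_order.2 ⟨fun a ha => ?_, fun ε hε => eventually_memoryGain_lt hβ hρ hB hD hw hε⟩
  filter_upwards [self_mem_nhdsWithin] with r (hr : 0 ≤ r)
  exact ha.trans_le (memoryGain_nonneg hβ hρ hB.le hD hw hr)

end MemoryGain

lemma le_weightedSup_div {u w : ℝ → ℝ} {D t₀ t s T : ℝ} (hu : ∀ s, 0 ≤ u s ∧ u s ≤ D)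
    (hw : ∀ t ≥ 0, 0 < w t ∧ w t ≤ 1) (hwA : AntitoneOn w (Ici 0))
    (hs : s ∈ Ico t₀ t) (hT : 0 ≤ T) (hsT : t - s ≤ T) :
    u s ≤ sSup {r | ∃ s ∈ Ico t₀ t, r = u s * w (t - s)} / w T := by
  have hts : 0 ≤ t - s := by linarith [hs.2]
  have hbdd : BddAbove {r | ∃ s ∈ Ico t₀ t, r = u s * w (t - s)} := by
    refine ⟨D, ?_⟩
    rintro _ ⟨s', hs', rfl⟩
    have := hw (t - s') (by linarith [hs'.2])
    nlinarith [hu s']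
  rw [le_div_iff₀ (hw T hT).1]
  calc u s * w T ≤ u s * w (t - s) := mul_le_mul_of_nonneg_left (hwA hts hT hsT) (hu s).1
    _ ≤ _ := le_csSup hbdd ⟨s, hs, rfl⟩

theorem exists_classKinf_decayingMemory_bound {β : ℝ → ℝ → ℝ} {ρ w : ℝ → ℝ}
    (hβ : ClassKL β) (hρ : ClassKinf ρ) {M D : ℝ} (hM : 0 < M) (hD : 0 ≤ D)
    (hw : ∀ t ≥ 0, 0 < w t ∧ w t ≤ 1) (hwA : AntitoneOn w (Ici 0)) :
    ∃ γ : ℝ → ℝ, ClassKinf γ ∧ ∀ (t₀ : ℝ) (V u : ℝ → ℝ), (∀ t, 0 ≤ V t) →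
      (∀ s, 0 ≤ u s ∧ u s ≤ D) →
      (∀ t₁ t c, t₀ ≤ t₁ → t₁ ≤ t → 0 ≤ c → (∀ s ∈ Ico t₁ t, u s ≤ c) →
        V t ≤ β (V t₁) (t - t₁) + ρ c) →
      V t₀ ≤ M → ∀ t ≥ t₀,
        V t ≤ β (V t₀) (t - t₀) + γ (sSup {r | ∃ s ∈ Ico t₀ t, r = u s * w (t - s)}) := by
  have hwpos : ∀ t ≥ 0, 0 < w t := fun t ht => (hw t ht).1
  set B := β M 0 + ρ D
  have hB : 0 < B := add_pos_of_pos_of_nonneg (hβ.pos_at_zero hM) (hρ.nonneg hD)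
  obtain ⟨γ, hγ, hgγ⟩ := (monotoneOn_memoryGain hβ hρ hB.le hD hwpos).exists_classKinf_ge
    (memoryGain_zero hβ hρ hB hD hwpos) (continuousWithinAt_memoryGain_zero hβ hρ hB hD hwpos)
  refine ⟨γ, hγ, fun t₀ V u hV hu hISS hV₀ t ht => ?_⟩
  have hVB : ∀ t₁ ≥ t₀, V t₁ ≤ B := fun t₁ ht₁ => by
    have hISS₀ := hISS t₀ t₁ D le_rfl ht₁ hD fun s _ => (hu s).2
    have hβM := (hβ.mono_left (sub_nonneg.2 ht₁) (hV t₀) hV₀).trans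
      (hβ.le_at_zero hM (sub_nonneg.2 ht₁))
    linarith
  set S := sSup {r | ∃ s ∈ Ico t₀ t, r = u s * w (t - s)}
  have hS : 0 ≤ S := Real.sSup_nonneg fun _ ⟨s, hs, hr⟩ =>
    hr ▸ mul_nonneg (hu s).1 (hwpos _ (by linarith [hs.2])).le
  have horizon : ∀ T : Ici (0 : ℝ), V t - β (V t₀) (t - t₀) ≤ β B T + ρ (min D (S / w T)) := by
    rintro ⟨T, hT : 0 ≤ T⟩
    set t₁ := max t₀ (t - T) with ht₁
    have hISS₁ := hISS t₁ t (min D (S / w T)) (le_max_left _ _) (max_le ht (by linarith))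
      (le_min hD (div_nonneg hS (hwpos T hT).le)) fun s hs => le_min (hu s).2
        (le_weightedSup_div hu hw hwA ⟨(le_max_left _ _).trans hs.1, hs.2⟩ hT
          (by linarith [(le_max_right t₀ (t - T)).trans hs.1]))
    have hβ₁ : β (V t₁) (t - t₁) ≤ β (V t₀) (t - t₀) + β B T := by
      rcases max_cases t₀ (t - T) with ⟨h, -⟩ | ⟨h, hlt⟩
      · rw [ht₁, h]; linarith [hβ.nonneg hB.le hT]
      · rw [ht₁, h, sub_sub_cancel]
        linarith [hβ.mono_left hT (hV _) (hVB (t - T) hlt.le), hβ.nonneg (hV t₀) (sub_nonneg.2 ht)]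
    linarith
  calc V t ≤ β (V t₀) (t - t₀) + memoryGain β ρ B D w S := by
        linarith [show V t - β (V t₀) (t - t₀) ≤ memoryGain β ρ B D w S from le_ciInf horizon]
    _ ≤ β (V t₀) (t - t₀) + γ S := add_le_add_right (hgγ S hS) _

theorem stmt9_general {N m : ℕ} (nz : Fin N → ℕ)
    (F : (i : Fin N) → ℝ → (Fin m → ℝ) → (Fin (nz i) → ℝ) → (Fin m → ℝ))
    (Z : (i : Fin N) → ℝ → (Fin (nz i) → ℝ) → (Fin m → ℝ) → (Fin (nz i) → ℝ))
    (A : Set ((Fin m → ℝ) × ((i : Fin N) → Fin (nz i) → ℝ)))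
    (β : ℝ → ℝ → ℝ) (γhat : ℝ → ℝ) (hβ : ClassKL β) (hγ : ClassKinf γhat)
    (dG : ℝ) (hdG : 0 ≤ dG) (Ψ : ℝ → ℝ) (hΨ0 : ∀ t, 0 ≤ Ψ t)
    (hΨbd : ∃ MΨ, ∀ t, Ψ t ≤ MΨ)
    -- ISS of the perturbed blended dynamics for the closed set `A`, from any initial time:
    (hISS : ∀ (t0' : ℝ) (σ : ℝ → Fin m → ℝ) (ζ : (i : Fin N) → ℝ → Fin (nz i) → ℝ)
        (e : Fin N → ℝ → Fin m → ℝ),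
        (∀ t ≥ t0', HasDerivAt σ ((N : ℝ)⁻¹ • ∑ i, F i t (σ t + e i t) (ζ i t)) t) →
        (∀ i, ∀ t ≥ t0', HasDerivAt (ζ i) (Z i t (ζ i t) (σ t + e i t)) t) →
        ∀ t ≥ t0',
          Metric.infDist ((σ t, fun i => ζ i t)) A ≤
            β (Metric.infDist ((σ t0', fun i => ζ i t0')) A) (t - t0') +
            γhat (sSup {r | ∃ s ∈ Set.Ico t0' t, ∃ i, r = ‖e i s‖})) :
    ∀ Mx0 > (0 : ℝ), ∀ w : ℝ → ℝ,
      (∀ t ≥ (0 : ℝ), 0 < w t ∧ w t ≤ 1) → AntitoneOn w (Set.Ici 0) →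
      Tendsto w atTop (nhds 0) →
      ∃ γ : ℝ → ℝ, ClassKinf γ ∧
        ∀ (t0 : ℝ) (y : Fin N → ℝ → Fin m → ℝ)
          (z : (i : Fin N) → ℝ → Fin (nz i) → ℝ),
          -- the coupling terms cancel in the average:
          (∀ t ≥ t0, HasDerivAt (fun τ => (N : ℝ)⁻¹ • ∑ i, y i τ)
              ((N : ℝ)⁻¹ • ∑ i, F i t (y i t) (z i t)) t) →
          (∀ i, ∀ t ≥ t0, HasDerivAt (z i) (Z i t (z i t) (y i t)) t) →
          -- funnel objective: synchronization errors bounded by `d_G Ψ`: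
          (∀ i, ∀ t ≥ t0, ‖y i t - (N : ℝ)⁻¹ • ∑ k, y k t‖ ≤ dG * Ψ t) →
          Metric.infDist (((N : ℝ)⁻¹ • ∑ k, y k t0, fun i => z i t0)) A ≤ Mx0 →
          ∀ t ≥ t0, ∀ i,
            Metric.infDist ((y i t, fun j => z j t)) A ≤
              β (Metric.infDist (((N : ℝ)⁻¹ • ∑ k, y k t0, fun j => z j t0)) A)
                (t - t0) +
              γ (sSup {r | ∃ s ∈ Set.Ico t0 t, r = dG * Ψ s * w (t - s)}) +
              dG * Ψ t := by
  intro Mx0 hMx0 w hw hwA _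
  obtain ⟨MΨ, hMΨ⟩ := hΨbd
  have hu : ∀ s, 0 ≤ dG * Ψ s ∧ dG * Ψ s ≤ dG * max MΨ 0 := fun s =>
    ⟨mul_nonneg hdG (hΨ0 s), mul_le_mul_of_nonneg_left ((hMΨ s).trans (le_max_left _ _)) hdG⟩
  obtain ⟨γ, hγK, hbound⟩ := exists_classKinf_decayingMemory_bound hβ hγ hMx0
    (mul_nonneg hdG (le_max_right _ _)) hw hwA
  refine ⟨γ, hγK, fun t0 y z hy hz hsync hx0 t ht i => ?_⟩
  set σ : ℝ → Fin m → ℝ := fun τ => (N : ℝ)⁻¹ • ∑ k, y k τ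
  have hISSσ : ∀ t₁ t c, t0 ≤ t₁ → t₁ ≤ t → 0 ≤ c → (∀ s ∈ Set.Ico t₁ t, dG * Ψ s ≤ c) →
      Metric.infDist ((σ t, fun j => z j t)) A ≤
        β (Metric.infDist ((σ t₁, fun j => z j t₁)) A) (t - t₁) + γhat c := by
    intro t₁ t c ht₁ htt hc hbd
    refine (hISS t₁ σ z (fun i τ => y i τ - σ τ) (fun τ hτ => ?_) (fun i τ hτ => ?_) t htt).trans
      (add_le_add_right (hγ.monotoneOn (Real.sSup_nonneg ?_) hc (Real.sSup_le ?_ hc)) _)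
    · simpa only [add_sub_cancel] using hy τ (ht₁.trans hτ)
    · simpa only [add_sub_cancel] using hz i τ (ht₁.trans hτ)
    · rintro _ ⟨s, -, i, rfl⟩
      exact norm_nonneg _
    · rintro _ ⟨s, hs, i, rfl⟩
      exact (hsync i s (ht₁.trans hs.1)).trans (hbd s hs)
  calc Metric.infDist (y i t, fun j => z j t) A
      ≤ Metric.infDist (σ t, fun j => z j t) A + dist (y i t) (σ t) :=
        Metric.infDist_le_infDist_add_dist.trans_eq (by rw [dist_prod_same_right])
    _ ≤ _ := add_le_add (hbound t0 _ _ (fun _ => Metric.infDist_nonneg) hu hISSσ hx0 t ht)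
        (dist_eq_norm (y i t) (σ t) ▸ hsync i t ht)

/-- Emergent behavior (Theorem 3): if the perturbed blended dynamics is ISS with `(β, γ̂)`
for a closed set `A`, then for any `M_{x0} > 0` and decaying weight `w` there is
`γ ∈ 𝒦_∞` such that every closed-loop network trajectory (whose average `s` solves the
perturbed blended dynamics with inputs `e_i = y_i - s` bounded by `d_G Ψ`) satisfies
`‖(y_i(t), z(t))‖_A ≤ β(‖(s(t_0), z(t_0))‖_A, t - t_0)
  + γ(sup_{s∈[t_0,t)} d_G Ψ(s) w(t-s)) + d_G Ψ(t)`. -/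
theorem stmt9 {N m : ℕ} (hN : 0 < N) (nz : Fin N → ℕ)
    (F : (i : Fin N) → ℝ → (Fin m → ℝ) → (Fin (nz i) → ℝ) → (Fin m → ℝ))
    (Z : (i : Fin N) → ℝ → (Fin (nz i) → ℝ) → (Fin m → ℝ) → (Fin (nz i) → ℝ))
    (A : Set ((Fin m → ℝ) × ((i : Fin N) → Fin (nz i) → ℝ))) (hA : IsClosed A)
    (β : ℝ → ℝ → ℝ) (γhat : ℝ → ℝ) (hβ : ClassKL β) (hγ : ClassKinf γhat)
    (dG : ℝ) (hdG : 0 ≤ dG) (Ψ : ℝ → ℝ) (hΨ0 : ∀ t, 0 ≤ Ψ t)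
    (hΨbd : ∃ MΨ, ∀ t, Ψ t ≤ MΨ)
    -- ISS of the perturbed blended dynamics for the closed set `A`, from any initial time:
    (hISS : ∀ (t0' : ℝ) (σ : ℝ → Fin m → ℝ) (ζ : (i : Fin N) → ℝ → Fin (nz i) → ℝ)
        (e : Fin N → ℝ → Fin m → ℝ),
        (∀ t ≥ t0', HasDerivAt σ ((N : ℝ)⁻¹ • ∑ i, F i t (σ t + e i t) (ζ i t)) t) →
        (∀ i, ∀ t ≥ t0', HasDerivAt (ζ i) (Z i t (ζ i t) (σ t + e i t)) t) →
        ∀ t ≥ t0',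
          Metric.infDist ((σ t, fun i => ζ i t)) A ≤
            β (Metric.infDist ((σ t0', fun i => ζ i t0')) A) (t - t0') +
            γhat (sSup {r | ∃ s ∈ Set.Ico t0' t, ∃ i, r = ‖e i s‖})) :
    ∀ Mx0 > (0 : ℝ), ∀ w : ℝ → ℝ,
      (∀ t ≥ (0 : ℝ), 0 < w t ∧ w t ≤ 1) → AntitoneOn w (Set.Ici 0) →
      Tendsto w atTop (nhds 0) →
      ∃ γ : ℝ → ℝ, ClassKinf γ ∧
        ∀ (t0 : ℝ) (y : Fin N → ℝ → Fin m → ℝ)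
          (z : (i : Fin N) → ℝ → Fin (nz i) → ℝ),
          -- the coupling terms cancel in the average:
          (∀ t ≥ t0, HasDerivAt (fun τ => (N : ℝ)⁻¹ • ∑ i, y i τ)
              ((N : ℝ)⁻¹ • ∑ i, F i t (y i t) (z i t)) t) →
          (∀ i, ∀ t ≥ t0, HasDerivAt (z i) (Z i t (z i t) (y i t)) t) →
          -- funnel objective: synchronization errors bounded by `d_G Ψ`:
          (∀ i, ∀ t ≥ t0, ‖y i t - (N : ℝ)⁻¹ • ∑ k, y k t‖ ≤ dG * Ψ t) →
          Metric.infDist (((N : ℝ)⁻¹ • ∑ k, y k t0, fun i => z i t0)) A ≤ Mx0 →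
          ∀ t ≥ t0, ∀ i,
            Metric.infDist ((y i t, fun j => z j t)) A ≤
              β (Metric.infDist (((N : ℝ)⁻¹ • ∑ k, y k t0, fun j => z j t0)) A)
                (t - t0) +
              γ (sSup {r | ∃ s ∈ Set.Ico t0 t, r = dG * Ψ s * w (t - s)}) +
              dG * Ψ t :=
  stmt9_general nz F Z A β γhat hβ hγ dG hdG Ψ hΨ0 hΨbd hISS
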